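/- There exists a constant C > 0, independent of τ̃, such that for every τ̃ > 0 and every eigenpair (λ, φ) of the one-dimensional NLEP with Re λ ≥ 0, one has |λ| ≤ C. -/

import Mathlib

/-!
Pairing the equation with `conj φ` and integrating by parts gives
`λ‖φ‖² = −‖φ‖² − ‖φ'‖² + 3∫w²|φ|² − K ∫w³ conj φ`, where `K` collects both nonlocal terms.
For `τ ≥ 0` and `Re λ ≥ 0` we have `|1 + τλ| ≥ 1`, hence `|3/(1+τλ)| ≤ 3` and `|τλ/(1+τλ)| ≤ 2`,
and Cauchy–Schwarz bounds the nonlocal term by `B‖φ‖²` with `B` depending on `w` only.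
Taking real parts, `Re λ ≥ 0` bounds the real part of the right-hand side from below by
`−B‖φ‖²`, while `w² ≤ 2` bounds it from above by `5‖φ‖²`. Hence `|λ| ≤ 5 + 2B`.
-/

open MeasureTheory Filter Real Set ComplexConjugate

noncomputable section

/-- The one-dimensional ground state `w(y) = √2 · sech y`, the unique even positive
solution of `w'' − w + w³ = 0` on `ℝ` tending to `0` at infinity. -/
def w1d (y : ℝ) : ℝ := Real.sqrt 2 / Real.cosh y

/-- An eigenpair `(λ, φ)` of the one-dimensional nonlocal eigenvalue problem (NLEP)
with parameter `τ̃`: `φ : ℝ → ℂ` is `C²`, not identically zero, with `φ` and `φ'`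
square-integrable, and satisfies
`φ'' − φ + 3w²φ − (3/(1+τ̃λ))·(∫w²φ/∫w³)·w³ − (2τ̃λ/(1+τ̃λ))·(∫wφ/∫w²)·w³ = λφ`
pointwise on `ℝ`. -/
def IsNLEP1Eigenpair (τ : ℝ) (lam : ℂ) (φ : ℝ → ℂ) : Prop :=
  ContDiff ℝ 2 φ ∧ (∃ x, φ x ≠ 0) ∧
  MemLp φ 2 volume ∧ MemLp (deriv φ) 2 volume ∧
  1 + (τ : ℂ) * lam ≠ 0 ∧
  ∀ x : ℝ, deriv (deriv φ) x - φ x + 3 * (w1d x : ℂ) ^ 2 * φ x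
      - (3 / (1 + (τ : ℂ) * lam)) *
          ((∫ y, (w1d y : ℂ) ^ 2 * φ y) / (∫ y, (w1d y : ℂ) ^ 3)) * (w1d x : ℂ) ^ 3
      - (2 * (τ : ℂ) * lam / (1 + (τ : ℂ) * lam)) *
          ((∫ y, (w1d y : ℂ) * φ y) / (∫ y, (w1d y : ℂ) ^ 2)) * (w1d x : ℂ) ^ 3
      = lam * φ x

lemma w1d_pos (y : ℝ) : 0 < w1d y := by unfold w1d; positivity

lemma continuous_w1d : Continuous w1d :=
  continuous_const.div continuous_cosh fun y => (cosh_pos y).ne'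

lemma w1d_sq (y : ℝ) : w1d y ^ 2 = 2 / cosh y ^ 2 := by
  rw [w1d, div_pow, sq_sqrt zero_le_two]

lemma w1d_sq_le_two (y : ℝ) : w1d y ^ 2 ≤ 2 := by
  rw [w1d_sq]
  exact div_le_self zero_le_two (one_le_pow₀ (one_le_cosh y))

lemma w1d_sq_le_two_mul_inv_one_add_sq (y : ℝ) : w1d y ^ 2 ≤ 2 * (1 + y ^ 2)⁻¹ := by
  have hy : |y| ≤ sinh |y| := self_le_sinh_iff.2 (abs_nonneg y)
  have : 1 + y ^ 2 ≤ cosh y ^ 2 := by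
    rw [cosh_sq, ← sq_abs y, ← sq_abs (sinh y), abs_sinh]
    nlinarith [abs_nonneg y]
  rw [w1d_sq, div_eq_mul_inv]
  gcongr

lemma integrable_w1d_pow {k : ℕ} (hk : 2 ≤ k) : Integrable (fun y => w1d y ^ k) := by
  obtain ⟨j, rfl⟩ := Nat.exists_eq_add_of_le' hk
  have hsq : Integrable fun y => w1d y ^ 2 :=
    (integrable_inv_one_add_sq.const_mul 2).mono' (continuous_w1d.pow 2).aestronglyMeasurable
      (.of_forall fun y => by
        rw [norm_of_nonneg (by positivity)]; exact w1d_sq_le_two_mul_inv_one_add_sq y)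
  simp_rw [pow_add]
  refine hsq.bdd_mul (c := √2 ^ j) (continuous_w1d.pow j).aestronglyMeasurable
    (.of_forall fun y => ?_)
  rw [norm_of_nonneg (pow_nonneg (w1d_pos y).le j)]
  exact pow_le_pow_left₀ (w1d_pos y).le
    (div_le_self (sqrt_nonneg 2) (one_le_cosh y)) j

lemma memLp_w1d_pow {k : ℕ} (hk : 1 ≤ k) : MemLp (fun y => (w1d y : ℂ) ^ k) 2 := by
  refine (memLp_two_iff_integrable_sq_norm
    ((Complex.continuous_ofReal.comp continuous_w1d).pow k).aestronglyMeasurable).2 ?_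
  simpa [← pow_mul, abs_of_pos (w1d_pos _)] using integrable_w1d_pow (k := k * 2) (by omega)

lemma integral_w1d_pow_pos {k : ℕ} (hk : 2 ≤ k) : 0 < ∫ y, w1d y ^ k := by
  rw [integral_pos_iff_support_of_nonneg (fun y => pow_nonneg (w1d_pos y).le k)
    (integrable_w1d_pow hk)]
  simp [Function.support, (w1d_pos _).ne']

section L2

variable {α : Type*} [MeasurableSpace α] {μ : Measure α}

lemma norm_integral_mul_le_sqrt_mul_sqrt {𝕜 : Type*} [RCLike 𝕜] {f g : α → 𝕜}
    (hf : MemLp f 2 μ) (hg : MemLp g 2 μ) :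
    ‖∫ x, f x * g x ∂μ‖ ≤ √(∫ x, ‖f x‖ ^ 2 ∂μ) * √(∫ x, ‖g x‖ ^ 2 ∂μ) := by
  have hCS := integral_mul_norm_le_Lp_mul_Lq Real.HolderConjugate.two_two
    (by simpa using hf) (by simpa using hg)
  simp only [rpow_two, ← sqrt_eq_rpow] at hCS
  refine (norm_integral_le_integral_norm _).trans ?_
  simpa only [norm_mul] using hCS

lemma integral_norm_sq_pos [TopologicalSpace α] [OpensMeasurableSpace α] [μ.IsOpenPosMeasure]
    {E : Type*} [NormedAddCommGroup E] {f : α → E} (hf : Continuous f) (h2 : MemLp f 2 μ)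
    (hne : ∃ x, f x ≠ 0) : 0 < ∫ x, ‖f x‖ ^ 2 ∂μ := by
  rw [integral_pos_iff_support_of_nonneg (fun x => sq_nonneg _)
    ((memLp_two_iff_integrable_sq_norm h2.1).1 h2)]
  obtain ⟨x, hx⟩ := hne
  exact (hf.norm.pow 2).isOpen_support.measure_pos μ ⟨x, by simpa using hx⟩

end L2

lemma integral_deriv_mul_conj_eq_neg {f f' f'' : ℝ → ℂ} (hf : ∀ x, HasDerivAt f (f' x) x)
    (hf' : ∀ x, HasDerivAt f' (f'' x) x) (h0 : MemLp f 2) (h1 : MemLp f' 2)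
    (h2 : MemLp f'' 2) :
    ∫ x, f'' x * conj (f x) = -((∫ x, ‖f' x‖ ^ 2 : ℝ) : ℂ) := by
  have h0c : MemLp (fun x => conj (f x)) 2 := h0.star
  have h1c : MemLp (fun x => conj (f' x)) 2 := h1.star
  have ibp := integral_mul_deriv_eq_deriv_mul_of_integrable (fun x _ => (hf x).star)
    (fun x _ => hf' x) (h0c.integrable_mul h2) (h1c.integrable_mul h1) (h0c.integrable_mul h1)
  simp only [← integral_complex_ofReal, Complex.ofReal_pow, ← Complex.mul_conj']
  simpa [mul_comm] using ibp

lemma norm_ofReal_w1d_pow (k : ℕ) (y : ℝ) : ‖(w1d y : ℂ) ^ k‖ = w1d y ^ k := by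
  rw [norm_pow, Complex.norm_real, norm_of_nonneg (w1d_pos y).le]

lemma integral_ofReal_w1d_pow (k : ℕ) : ∫ y, (w1d y : ℂ) ^ k = ((∫ y, w1d y ^ k : ℝ) : ℂ) := by
  simp only [← integral_complex_ofReal, Complex.ofReal_pow]

lemma norm_integral_w1d_pow_mul_le {k : ℕ} (hk : 1 ≤ k) {φ : ℝ → ℂ} (hφ : MemLp φ 2) :
    ‖∫ y, (w1d y : ℂ) ^ k * φ y‖ ≤ √(∫ y, w1d y ^ (2 * k)) * √(∫ y, ‖φ y‖ ^ 2) := by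
  simpa only [norm_ofReal_w1d_pow, ← pow_mul, mul_comm k] using
    norm_integral_mul_le_sqrt_mul_sqrt (memLp_w1d_pow hk) hφ

def nlepCoeff (τ : ℝ) (lam : ℂ) (φ : ℝ → ℂ) : ℂ :=
  3 / (1 + τ * lam) * ((∫ y, (w1d y : ℂ) ^ 2 * φ y) / ∫ y, (w1d y : ℂ) ^ 3)
    + 2 * τ * lam / (1 + τ * lam) * ((∫ y, (w1d y : ℂ) * φ y) / ∫ y, (w1d y : ℂ) ^ 2)

lemma one_le_norm_one_add_mul {τ : ℝ} (hτ : 0 ≤ τ) {lam : ℂ} (hre : 0 ≤ lam.re) :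
    1 ≤ ‖1 + τ * lam‖ :=
  calc (1 : ℝ) ≤ (1 + τ * lam).re := by simp; positivity
    _ ≤ ‖1 + τ * lam‖ := Complex.re_le_norm _

def nlepCoeffBound : ℝ :=
  3 * √(∫ y, w1d y ^ 4) / (∫ y, w1d y ^ 3) + 4 * √(∫ y, w1d y ^ 2) / (∫ y, w1d y ^ 2)

lemma nlepCoeffBound_nonneg : 0 ≤ nlepCoeffBound :=
  add_nonneg (div_nonneg (by positivity) (integral_w1d_pow_pos (by norm_num)).le)
    (div_nonneg (by positivity) (integral_w1d_pow_pos le_rfl).le)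

lemma norm_nlepCoeff_le {τ : ℝ} (hτ : 0 ≤ τ) {lam : ℂ} (hre : 0 ≤ lam.re) {φ : ℝ → ℂ}
    (hφ : MemLp φ 2) :
    ‖nlepCoeff τ lam φ‖ ≤ nlepCoeffBound * √(∫ y, ‖φ y‖ ^ 2) := by
  have hden : (1 + τ * lam : ℂ) ≠ 0 :=
    norm_pos_iff.1 (one_pos.trans_le (one_le_norm_one_add_mul hτ hre))
  have hinv : ‖1 / (1 + τ * lam)‖ ≤ 1 := by
    rw [norm_div, norm_one]
    exact div_le_one_of_le₀ (one_le_norm_one_add_mul hτ hre) (norm_nonneg _)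
  have h3 : ‖3 / (1 + τ * lam)‖ ≤ 3 := by
    rw [div_eq_mul_one_div, norm_mul, Complex.norm_ofNat]
    linarith
  have h2 : ‖2 * τ * lam / (1 + τ * lam)‖ ≤ 4 :=
    calc ‖2 * τ * lam / (1 + τ * lam)‖ = 2 * ‖1 - 1 / (1 + τ * lam)‖ := by
          rw [← Complex.norm_two, ← norm_mul]; congr 1; field_simp; ring
      _ ≤ 2 * (‖(1 : ℂ)‖ + ‖1 / (1 + τ * lam)‖) := by gcongr; exact norm_sub_le _ _
      _ ≤ 4 := by rw [norm_one]; linarith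
  have hJ2 : ‖(∫ y, (w1d y : ℂ) ^ 2 * φ y) / ∫ y, (w1d y : ℂ) ^ 3‖
      ≤ √(∫ y, w1d y ^ 4) * √(∫ y, ‖φ y‖ ^ 2) / ∫ y, w1d y ^ 3 := by
    have hI3 := integral_w1d_pow_pos (show 2 ≤ 3 by norm_num)
    rw [integral_ofReal_w1d_pow, norm_div, Complex.norm_real, norm_of_nonneg hI3.le]
    exact div_le_div_of_nonneg_right (norm_integral_w1d_pow_mul_le (k := 2) one_le_two hφ) hI3.le
  have hJ1 : ‖(∫ y, (w1d y : ℂ) * φ y) / ∫ y, (w1d y : ℂ) ^ 2‖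
      ≤ √(∫ y, w1d y ^ 2) * √(∫ y, ‖φ y‖ ^ 2) / ∫ y, w1d y ^ 2 := by
    have hI2 := integral_w1d_pow_pos le_rfl
    rw [integral_ofReal_w1d_pow, norm_div, Complex.norm_real, norm_of_nonneg hI2.le]
    exact div_le_div_of_nonneg_right
      (by simpa using norm_integral_w1d_pow_mul_le (k := 1) le_rfl hφ) hI2.le
  calc ‖nlepCoeff τ lam φ‖
      ≤ 3 * (√(∫ y, w1d y ^ 4) * √(∫ y, ‖φ y‖ ^ 2) / ∫ y, w1d y ^ 3)
        + 4 * (√(∫ y, w1d y ^ 2) * √(∫ y, ‖φ y‖ ^ 2) / ∫ y, w1d y ^ 2) := by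
        refine (norm_add_le _ _).trans ?_
        rw [norm_mul, norm_mul]
        gcongr
    _ = nlepCoeffBound * √(∫ y, ‖φ y‖ ^ 2) := by rw [nlepCoeffBound]; ring

namespace IsNLEP1Eigenpair

variable {τ : ℝ} {lam : ℂ} {φ : ℝ → ℂ}

lemma deriv_deriv_eq (h : IsNLEP1Eigenpair τ lam φ) (x : ℝ) :
    deriv (deriv φ) x
      = (lam + 1) * φ x - 3 * ((w1d x : ℂ) ^ 2 * φ x)
        + nlepCoeff τ lam φ * (w1d x : ℂ) ^ 3 := by
  rw [nlepCoeff]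
  linear_combination h.2.2.2.2.2 x

lemma hasDerivAt (h : IsNLEP1Eigenpair τ lam φ) (x : ℝ) : HasDerivAt φ (deriv φ x) x :=
  (h.1.differentiable two_ne_zero x).hasDerivAt

lemma hasDerivAt_deriv (h : IsNLEP1Eigenpair τ lam φ) (x : ℝ) :
    HasDerivAt (deriv φ) (deriv (deriv φ) x) x :=
  ((h.1.iterate_deriv' 1 1).differentiable one_ne_zero x).hasDerivAt

lemma memLp_w1d_sq_mul (h : IsNLEP1Eigenpair τ lam φ) :
    MemLp (fun x => (w1d x : ℂ) ^ 2 * φ x) 2 :=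
  h.2.2.1.of_le_mul (c := 2)
    (((Complex.continuous_ofReal.comp continuous_w1d).pow 2).aestronglyMeasurable.mul h.2.2.1.1)
    (.of_forall fun x => by
      rw [norm_mul, norm_ofReal_w1d_pow]
      exact mul_le_mul_of_nonneg_right (w1d_sq_le_two x) (norm_nonneg _))

lemma memLp_deriv_deriv (h : IsNLEP1Eigenpair τ lam φ) : MemLp (deriv (deriv φ)) 2 := by
  rw [funext h.deriv_deriv_eq]
  exact ((h.2.2.1.const_mul _).sub (h.memLp_w1d_sq_mul.const_mul 3)).add
    ((memLp_w1d_pow (k := 3) (by norm_num)).const_mul _)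

lemma energy_identity (h : IsNLEP1Eigenpair τ lam φ) :
    lam * ((∫ x, ‖φ x‖ ^ 2 : ℝ) : ℂ)
      = ((-(∫ x, ‖φ x‖ ^ 2) - (∫ x, ‖deriv φ x‖ ^ 2) + 3 * ∫ x, w1d x ^ 2 * ‖φ x‖ ^ 2 : ℝ) : ℂ)
        - nlepCoeff τ lam φ * ∫ x, (w1d x : ℂ) ^ 3 * conj (φ x) := by
  have hφ := h.2.2.1
  have hN : Integrable fun x => ‖φ x‖ ^ 2 := (memLp_two_iff_integrable_sq_norm hφ.1).1 hφ
  have hM : Integrable fun x => w1d x ^ 2 * ‖φ x‖ ^ 2 :=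
    hN.bdd_mul (c := 2) (continuous_w1d.pow 2).aestronglyMeasurable
      (.of_forall fun x => by
        rw [norm_of_nonneg (sq_nonneg _)]; exact w1d_sq_le_two x)
  have hJ : Integrable fun x => (w1d x : ℂ) ^ 3 * conj (φ x) :=
    (memLp_w1d_pow (k := 3) (by norm_num)).integrable_mul hφ.star
  have hpointwise : ∀ x, deriv (deriv φ) x * conj (φ x)
      = (lam + 1) * ((‖φ x‖ ^ 2 : ℝ) : ℂ) - 3 * ((w1d x ^ 2 * ‖φ x‖ ^ 2 : ℝ) : ℂ)
        + nlepCoeff τ lam φ * ((w1d x : ℂ) ^ 3 * conj (φ x)) := by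
    intro x
    rw [h.deriv_deriv_eq]
    push_cast
    rw [← Complex.mul_conj']
    ring
  have hibp := integral_deriv_mul_conj_eq_neg h.hasDerivAt h.hasDerivAt_deriv hφ h.2.2.2.1
    h.memLp_deriv_deriv
  have hlocal : Integrable fun x =>
      (lam + 1) * ((‖φ x‖ ^ 2 : ℝ) : ℂ) - 3 * ((w1d x ^ 2 * ‖φ x‖ ^ 2 : ℝ) : ℂ) :=
    (hN.ofReal.const_mul _).sub (hM.ofReal.const_mul _)
  rw [funext hpointwise, integral_add hlocal (hJ.const_mul _),
    integral_sub (hN.ofReal.const_mul _) (hM.ofReal.const_mul _), integral_const_mul,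
    integral_const_mul, integral_const_mul, integral_complex_ofReal, integral_complex_ofReal]
    at hibp
  push_cast
  linear_combination hibp

lemma norm_le (h : IsNLEP1Eigenpair τ lam φ) (hτ : 0 ≤ τ) (hre : 0 ≤ lam.re) :
    ‖lam‖ ≤ 5 + 2 * (nlepCoeffBound * √(∫ y, w1d y ^ 6)) := by
  have hid := h.energy_identity
  obtain ⟨hC2, hne, hφ, -, -, -⟩ := h
  set N := ∫ x, ‖φ x‖ ^ 2
  set E := nlepCoeff τ lam φ * ∫ x, (w1d x : ℂ) ^ 3 * conj (φ x)
  set B := nlepCoeffBound * √(∫ y, w1d y ^ 6)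
  have hN : 0 < N := integral_norm_sq_pos hC2.continuous hφ hne
  have hG : 0 ≤ ∫ x, ‖deriv φ x‖ ^ 2 := integral_nonneg fun x => sq_nonneg _
  have hM : ∫ x, w1d x ^ 2 * ‖φ x‖ ^ 2 ≤ 2 * N := by
    rw [← integral_const_mul]
    exact integral_mono_of_nonneg (.of_forall fun x => by positivity)
      (((memLp_two_iff_integrable_sq_norm hφ.1).1 hφ).const_mul 2)
      (.of_forall fun x => mul_le_mul_of_nonneg_right (w1d_sq_le_two x) (sq_nonneg _))
  have hE : ‖E‖ ≤ B * N := by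
    have hJ := norm_integral_w1d_pow_mul_le (k := 3) (by norm_num) hφ.star
    simp only [Pi.star_apply, Complex.star_def, Complex.norm_conj] at hJ
    calc ‖E‖ ≤ (nlepCoeffBound * √N) * (√(∫ y, w1d y ^ 6) * √N) := by
          rw [norm_mul]
          exact mul_le_mul (norm_nlepCoeff_le hτ hre hφ) hJ (norm_nonneg _)
            (mul_nonneg nlepCoeffBound_nonneg (sqrt_nonneg _))
      _ = B * N := by rw [mul_mul_mul_comm, mul_self_sqrt hN.le]
  set R := -N - (∫ x, ‖deriv φ x‖ ^ 2) + 3 * ∫ x, w1d x ^ 2 * ‖φ x‖ ^ 2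
  have hRE : lam.re * N = R - E.re := by
    simpa using congrArg Complex.re hid
  have hR : |R| ≤ (5 + B) * N := by
    have hEre := neg_le_of_abs_le ((Complex.abs_re_le_norm E).trans hE)
    have hB : 0 ≤ B := mul_nonneg nlepCoeffBound_nonneg (sqrt_nonneg _)
    refine abs_le.2 ⟨?_, by nlinarith⟩
    nlinarith [mul_nonneg hre hN.le]
  have hlamN : ‖lam‖ * N ≤ (5 + 2 * B) * N :=
    calc ‖lam‖ * N = ‖(R : ℂ) - E‖ := by
          rw [← hid, norm_mul, Complex.norm_real, norm_of_nonneg hN.le]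
      _ ≤ |R| + ‖E‖ := by simpa using norm_sub_le (R : ℂ) E
      _ ≤ (5 + 2 * B) * N := by linarith
  exact le_of_mul_le_mul_right hlamN hN

end IsNLEP1Eigenpair

/-- Any eigenvalue of the one-dimensional NLEP with nonnegative real part is bounded,
uniformly in `τ̃ > 0`. -/
theorem nlep1_eigenvalue_bound :
    ∃ C > (0:ℝ), ∀ τ : ℝ, 0 < τ → ∀ (lam : ℂ) (φ : ℝ → ℂ),
      IsNLEP1Eigenpair τ lam φ → 0 ≤ lam.re → ‖lam‖ ≤ C :=
  ⟨5 + 2 * (nlepCoeffBound * √(∫ y, w1d y ^ 6)),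
    add_pos_of_pos_of_nonneg (by norm_num)
      (mul_nonneg zero_le_two (mul_nonneg nlepCoeffBound_nonneg (sqrt_nonneg _))),
    fun _ hτ _ _ h hre => h.norm_le hτ.le hre⟩
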